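/- Let Λ be an integral lattice of determinant 1, and let M, N ⊆ Λ be sublattices with M = Λ ∩ N^⊥ and N = Λ ∩ M^⊥ (orthogonal complements taken in Λ ⊗ R). Then the determinant groups M^♯/M and N^♯/N are isomorphic; in particular det M = det N. -/

import Mathlib

open Matrix

/-- The dual lattice `M^♯ = {x ∈ M ⊗ ℝ : ⟪x, m⟫ ∈ ℤ for all m ∈ M}` of a `ℤ`-submodule
`M` of Euclidean space, viewed inside the real span of `M`. -/
noncomputable def dualLattice {d : ℕ} (M : Submodule ℤ (EuclideanSpace ℝ (Fin d))) :
    Submodule ℤ (EuclideanSpace ℝ (Fin d)) where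
  carrier := {x | x ∈ Submodule.span ℝ (M : Set (EuclideanSpace ℝ (Fin d))) ∧
    ∀ m ∈ M, ∃ k : ℤ, (inner ℝ x m : ℝ) = k}
  zero_mem' := ⟨Submodule.zero_mem _, fun m _ => ⟨0, by simp⟩⟩
  add_mem' := by
    rintro a b ⟨ha1, ha2⟩ ⟨hb1, hb2⟩
    refine ⟨Submodule.add_mem _ ha1 hb1, fun m hm => ?_⟩
    obtain ⟨k1, h1⟩ := ha2 m hm
    obtain ⟨k2, h2⟩ := hb2 m hm
    exact ⟨k1 + k2, by rw [inner_add_left, h1, h2]; push_cast; ring⟩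
  smul_mem' := by
    rintro c x ⟨hx1, hx2⟩
    refine ⟨Submodule.smul_of_tower_mem _ c hx1, fun m hm => ?_⟩
    obtain ⟨k, hk⟩ := hx2 m hm
    refine ⟨c * k, ?_⟩
    have hcx : c • x = (c : ℝ) • x := by
      exact (Int.cast_smul_eq_zsmul ℝ c x).symm
    rw [hcx, real_inner_smul_left, hk]
    push_cast; ring

/-!
Let `p` be the orthogonal projection onto the real span of `M`. Since `M = Λ ∩ N^⊥`, the quotient
`Λ/M` is torsion free, so `M` is a direct summand of `Λ` and every integral functional on `M`
extends to `Λ`; as `Λ` is unimodular, that extension is `⟪x, ·⟫` for some `x ∈ Λ`. Hence `p` maps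
`Λ` onto `M^♯`. For `x ∈ Λ` we have `p x ∈ M` iff `x - p x ∈ Λ ∩ M^⊥ = N`, so
`M^♯/M ≅ Λ/(M + N)`, and by symmetry this is also `N^♯/N`.
-/

open Set Submodule
open scoped RealInnerProductSpace

theorem Submodule.exists_isProj_of_isTorsionFree_quotient {R M : Type*} [CommRing R] [IsDomain R]
    [IsPrincipalIdealRing R] [AddCommGroup M] [Module R M] [Module.Finite R M]
    (N : Submodule R M) [Module.IsTorsionFree R (M ⧸ N)] :
    ∃ π : M →ₗ[R] M, LinearMap.IsProj N π := by
  obtain ⟨s, hs⟩ := Module.projective_lifting_property N.mkQ LinearMap.id N.mkQ_surjective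
  refine ⟨LinearMap.id - s ∘ₗ N.mkQ, fun x => ?_, fun x hx => ?_⟩
  · rw [← Quotient.mk_eq_zero]
    simpa [sub_eq_zero] using congr($hs (N.mkQ x)).symm
  · simp [(Quotient.mk_eq_zero N).mpr hx]

theorem exists_mem_inner_eq_of_isUnit_det {E ι : Type*} [NormedAddCommGroup E]
    [InnerProductSpace ℝ E] [Fintype ι] [DecidableEq ι] {Λ : Submodule ℤ E} {b : ι → E}
    (hΛ : Λ = span ℤ (range b)) (G : Matrix ι ι ℤ) (hG : ∀ i j, ⟪b i, b j⟫ = G i j)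
    (hunit : IsUnit G.det) (F : Λ →ₗ[ℤ] ℝ) (hF : ∀ y, ∃ k : ℤ, F y = k) :
    ∃ x ∈ Λ, ∀ y : Λ, ⟪x, (y : E)⟫ = F y := by
  subst hΛ
  have hb : ∀ j, b j ∈ span ℤ (range b) := fun j => subset_span (mem_range_self j)
  choose v hv using fun j => hF ⟨b j, hb j⟩
  -- `G⁻¹` has integer entries because `det G` is a unit, and `∑ cᵢ • bᵢ` pairs with `b j` to `v j`.
  set c := v ᵥ* G⁻¹
  have hcG : c ᵥ* G = v := by
    rw [Matrix.vecMul_vecMul, Matrix.nonsing_inv_mul G hunit, Matrix.vecMul_one]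
  refine ⟨∑ i, c i • b i, sum_mem fun i _ => zsmul_mem (hb i) _, ?_⟩
  suffices h : (innerₗ E (∑ i, c i • b i)).restrictScalars ℤ ∘ₗ (span ℤ (range b)).subtype = F
    from fun y => congr($h y)
  refine LinearMap.ext_on span_span_coe_preimage ?_
  rintro ⟨_, hy⟩ ⟨j, rfl⟩
  simp only [LinearMap.coe_comp, Function.comp_apply, subtype_apply,
    LinearMap.coe_restrictScalars, innerₗ_apply_apply]
  rw [show F ⟨b j, hy⟩ = v j from hv j, ← hcG, sum_inner]
  simp [← Int.cast_smul_eq_zsmul ℝ, real_inner_smul_left, hG, Matrix.vecMul, dotProduct]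

theorem mem_orthogonal_span_of_forall_inner_eq_zero {F : Type*} [NormedAddCommGroup F]
    [InnerProductSpace ℝ F] {s : Set F} {x : F} (h : ∀ m ∈ s, ⟪x, m⟫ = 0) :
    x ∈ (span ℝ s)ᗮ :=
  isOrtho_iff_le.mp (isOrtho_span.mpr fun _ hu m hm => (mem_singleton_iff.mp hu) ▸ h m hm)
    (mem_span_singleton_self x)

section ProjectionOntoSpan

variable {d : ℕ} {Λ M N : Submodule ℤ (EuclideanSpace ℝ (Fin d))}

local notation "E" => EuclideanSpace ℝ (Fin d)

theorem isTorsionFree_quotient_of_forall_mem_iff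
    (hM : ∀ x, x ∈ M ↔ x ∈ Λ ∧ ∀ y ∈ N, ⟪x, y⟫ = 0) :
    Module.IsTorsionFree ℤ (Λ ⧸ M.comap Λ.subtype) := by
  refine .of_smul_eq_zero fun k q hq => ?_
  obtain ⟨x, rfl⟩ := mkQ_surjective _ q
  rw [← map_smul, mkQ_apply, Quotient.mk_eq_zero, mem_comap] at hq
  rw [mkQ_apply, Quotient.mk_eq_zero, mem_comap, or_iff_not_imp_left]
  refine fun hk => (hM x).mpr ⟨x.2, fun y hy => ?_⟩
  have hkxy := ((hM _).mp hq).2 y hy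
  rw [subtype_apply, coe_smul, ← Int.cast_smul_eq_zsmul ℝ, real_inner_smul_left] at hkxy
  exact (mul_eq_zero.mp hkxy).resolve_left (Int.cast_ne_zero.mpr hk)

theorem starProjection_span_mem_dualLattice
    (hint : ∀ x ∈ Λ, ∀ y ∈ Λ, ∃ k : ℤ, ⟪x, y⟫ = k) (hMΛ : M ≤ Λ) {x : E} (hx : x ∈ Λ) :
    (span ℝ (M : Set E)).starProjection x ∈ dualLattice M := by
  refine ⟨starProjection_apply_mem _ x, fun m hm => ?_⟩
  rw [inner_starProjection_left_eq_right, starProjection_eq_self_iff.mpr (subset_span hm)]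
  exact hint x hx m (hMΛ hm)

theorem exists_starProjection_span_eq {ι : Type*} [Fintype ι] [DecidableEq ι] {b : ι → E}
    (hΛ : Λ = span ℤ (range b)) (G : Matrix ι ι ℤ) (hG : ∀ i j, ⟪b i, b j⟫ = G i j)
    (hunit : IsUnit G.det) (hMΛ : M ≤ Λ) [Module.IsTorsionFree ℤ (Λ ⧸ M.comap Λ.subtype)]
    {φ : E} (hφ : φ ∈ dualLattice M) :
    ∃ x ∈ Λ, (span ℝ (M : Set E)).starProjection x = φ := by
  have : Module.Finite ℤ Λ := hΛ ▸ Module.Finite.span_of_finite ℤ (finite_range b)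
  obtain ⟨π, hπ⟩ := (M.comap Λ.subtype).exists_isProj_of_isTorsionFree_quotient
  obtain ⟨x, hxΛ, hx⟩ := exists_mem_inner_eq_of_isUnit_det hΛ G hG hunit
    ((innerₗ E φ).restrictScalars ℤ ∘ₗ Λ.subtype ∘ₗ π) fun y => hφ.2 _ (hπ.map_mem y)
  refine ⟨x, hxΛ, eq_starProjection_of_mem_orthogonal hφ.1 ?_⟩
  refine mem_orthogonal_span_of_forall_inner_eq_zero fun m hm => ?_
  have hxm := hx ⟨m, hMΛ hm⟩
  rw [LinearMap.comp_apply, LinearMap.comp_apply, hπ.map_id ⟨m, hMΛ hm⟩ hm] at hxm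
  simp [inner_sub_left, hxm]

theorem starProjection_span_mem_iff (hMΛ : M ≤ Λ)
    (hN : ∀ x, x ∈ N ↔ x ∈ Λ ∧ ∀ y ∈ M, ⟪x, y⟫ = 0) {x : E} (hx : x ∈ Λ) :
    (span ℝ (M : Set E)).starProjection x ∈ M ↔ x ∈ M ⊔ N := by
  set V := span ℝ (M : Set E)
  constructor
  · intro hpx
    have hsub : x - V.starProjection x ∈ N := (hN _).mpr ⟨sub_mem hx (hMΛ hpx),
      fun y hy => V.starProjection_inner_eq_zero x y (subset_span hy)⟩
    exact mem_sup.mpr ⟨_, hpx, _, hsub, add_sub_cancel _ _⟩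
  · intro h
    obtain ⟨m, hm, n, hn, rfl⟩ := mem_sup.mp h
    have hn0 : V.starProjection n = 0 := V.starProjection_apply_eq_zero_iff.mpr <|
      mem_orthogonal_span_of_forall_inner_eq_zero ((hN n).mp hn).2
    rwa [map_add, hn0, add_zero, starProjection_eq_self_iff.mpr (subset_span hm)]

theorem nonempty_dualLattice_quotient_equiv {ι : Type*} [Fintype ι] [DecidableEq ι] {b : ι → E}
    (hΛ : Λ = span ℤ (range b)) (G : Matrix ι ι ℤ) (hG : ∀ i j, ⟪b i, b j⟫ = G i j)
    (hunit : IsUnit G.det) (hint : ∀ x ∈ Λ, ∀ y ∈ Λ, ∃ k : ℤ, ⟪x, y⟫ = k) (hMΛ : M ≤ Λ)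
    [Module.IsTorsionFree ℤ (Λ ⧸ M.comap Λ.subtype)]
    (hN : ∀ x, x ∈ N ↔ x ∈ Λ ∧ ∀ y ∈ M, ⟪x, y⟫ = 0) :
    Nonempty ((dualLattice M ⧸ M.comap (dualLattice M).subtype) ≃ₗ[ℤ]
      (Λ ⧸ (M ⊔ N).comap Λ.subtype)) := by
  let proj : Λ →ₗ[ℤ] dualLattice M :=
    (((span ℝ (M : Set E)).starProjection : E →ₗ[ℝ] E).restrictScalars ℤ ∘ₗ Λ.subtype).codRestrict
      _ fun x => starProjection_span_mem_dualLattice hint hMΛ x.2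
  let f := (M.comap (dualLattice M).subtype).mkQ ∘ₗ proj
  have hf : Function.Surjective f := by
    refine (mkQ_surjective _).comp fun φ => ?_
    obtain ⟨x, hx, hxφ⟩ := exists_starProjection_span_eq hΛ G hG hunit hMΛ φ.2
    exact ⟨⟨x, hx⟩, Subtype.ext hxφ⟩
  have hker : LinearMap.ker f = (M ⊔ N).comap Λ.subtype := by
    ext x
    rw [LinearMap.mem_ker, LinearMap.comp_apply, mkQ_apply, Quotient.mk_eq_zero, mem_comap,
      mem_comap]
    exact starProjection_span_mem_iff hMΛ hN x.2
  exact ⟨(f.quotKerEquivOfSurjective hf).symm ≪≫ₗ quotEquivOfEq _ _ hker⟩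

end ProjectionOntoSpan

theorem stmt10 (d : ℕ) (Λ M N : Submodule ℤ (EuclideanSpace ℝ (Fin d)))
    (b : Module.Basis (Fin d) ℝ (EuclideanSpace ℝ (Fin d)))
    (hΛ : Λ = Submodule.span ℤ (Set.range b))
    (hdet : (Matrix.of fun i j : Fin d => (inner ℝ (b i) (b j) : ℝ)).det = 1)
    (hint : ∀ x ∈ Λ, ∀ y ∈ Λ, ∃ k : ℤ, (inner ℝ x y : ℝ) = k)
    (hM : ∀ x, x ∈ M ↔ x ∈ Λ ∧ ∀ y ∈ N, (inner ℝ x y : ℝ) = 0)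
    (hN : ∀ x, x ∈ N ↔ x ∈ Λ ∧ ∀ y ∈ M, (inner ℝ x y : ℝ) = 0) :
    Nonempty
      ((↥(dualLattice M) ⧸ Submodule.comap (dualLattice M).subtype M) ≃ₗ[ℤ]
       (↥(dualLattice N) ⧸ Submodule.comap (dualLattice N).subtype N)) := by
  have hb : ∀ i, b i ∈ Λ := fun i => hΛ ▸ subset_span (mem_range_self i)
  obtain ⟨G, hG⟩ : ∃ G : Matrix (Fin d) (Fin d) ℤ, ∀ i j, ⟪b i, b j⟫ = G i j := by
    choose G hG using fun i j => hint _ (hb i) _ (hb j)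
    exact ⟨G, hG⟩
  have hunit : IsUnit G.det := by
    have hcast : Int.castRingHom ℝ G.det = 1 := by
      rw [← hdet, RingHom.map_det]
      congr 1
      ext i j
      simp [hG]
    rw [Int.cast_eq_one.mp hcast]
    exact isUnit_one
  have := isTorsionFree_quotient_of_forall_mem_iff hM
  have := isTorsionFree_quotient_of_forall_mem_iff hN
  obtain ⟨eM⟩ := nonempty_dualLattice_quotient_equiv hΛ G hG hunit hint
    (fun x hx => ((hM x).mp hx).1) hN
  obtain ⟨eN⟩ := nonempty_dualLattice_quotient_equiv hΛ G hG hunit hint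
    (fun x hx => ((hN x).mp hx).1) hM
  exact ⟨eM ≪≫ₗ quotEquivOfEq _ _ (by rw [sup_comm]) ≪≫ₗ eN.symm⟩
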